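/- (Discrete ABP-type maximum principle.) Let E ⊂ ℤ^d be finite, let L_a be a balanced, uniformly elliptic (constant κ), nearest-neighbor probability difference operator on ℤ^d, and let u be a function on Ē with L_a u(x) ≥ −g(x) for all x ∈ E with I_u(x) ≠ ∅, where g ≥ 0. Then max_E u ≤ (2/κ)·diam(Ē)·(∑_{x∈E, I_u(x)≠∅} g(x)^d)^{1/d} + max_{∂E} u, where diam is the ℓ^∞-diameter. -/

import Mathlib

open scoped Classical

/-- The `i`-th unit vector in `ℤ^d`. -/
def unitv (d : ℕ) (i : Fin d) : Fin d → ℤ := fun j => if j = i then 1 else 0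

/-- Nearest neighbors in `ℤ^d` (i.e. `|x - y| = 1`). -/
def isNbr {d : ℕ} (x y : Fin d → ℤ) : Prop := (∑ j, (x j - y j).natAbs) = 1

/-- The outer lattice boundary `∂E` of a set `E ⊆ ℤ^d`. -/
def bdry {d : ℕ} (E : Set (Fin d → ℤ)) : Set (Fin d → ℤ) :=
  {y | y ∉ E ∧ ∃ x ∈ E, isNbr x y}

/-- The difference operator `L_a u (x) = ∑_y a(x,y)(u(y) - u(x))`. -/
noncomputable def La {d : ℕ} (a : (Fin d → ℤ) → (Fin d → ℤ) → ℝ)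
    (u : (Fin d → ℤ) → ℝ) (x : Fin d → ℤ) : ℝ :=
  ∑ i : Fin d,
    (a x (x + unitv d i) * (u (x + unitv d i) - u x) +
     a x (x - unitv d i) * (u (x - unitv d i) - u x))

/-- The upper contact set `I_u(x)`. -/
def contact {d : ℕ} (clE : Set (Fin d → ℤ)) (u : (Fin d → ℤ) → ℝ)
    (x : Fin d → ℤ) : Set (Fin d → ℝ) :=
  {s | ∀ z ∈ clE, u z - ∑ j, s j * (z j : ℝ) ≤ u x - ∑ j, s j * (x j : ℝ)}

/-- The `ℓ^∞`-diameter of a finite subset of `ℤ^d`. -/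
def ellInfDiam {d : ℕ} (F : Finset (Fin d → ℤ)) : ℕ :=
  (F ×ˢ F).sup fun p => Finset.univ.sup fun j => (p.1 j - p.2 j).natAbs

/-! Suppose `max_E u > max_{∂E} u` and put `r = (max_E u - max_{∂E} u) / (d · diam Ē)`. Every
slope `s` with `‖s‖_∞ < r` supports `u` over `Ē` at some point, and that point lies in `E`: touching
at `y ∈ ∂E` would give `max_E u - max_{∂E} u ≤ s · (x - y) < d r diam Ē`. At a contact point `z`
the supporting slopes lie in the box of one-sided difference quotients, whose side lengths are the
negative second differences; by balance, `κ` times their sum is at most `-L_a u(z) ≤ g(z)`, so by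
AM-GM the box has volume at most `(g(z) / (κ d))^d`. Comparing with the volume `(2r)^d` of the
cube gives the estimate. -/

open MeasureTheory Finset

section Lattice

variable {d : ℕ}

lemma isNbr_add_unitv (x : Fin d → ℤ) (i : Fin d) : isNbr x (x + unitv d i) := by
  simp [isNbr, unitv, apply_ite]

lemma isNbr_sub_unitv (x : Fin d → ℤ) (i : Fin d) : isNbr x (x - unitv d i) := by
  simp [isNbr, unitv, apply_ite]

lemma sum_mul_add_unitv (s : Fin d → ℝ) (y : Fin d → ℤ) (i : Fin d) :
    ∑ j, s j * ((y + unitv d i) j : ℝ) = ∑ j, s j * (y j : ℝ) + s i := by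
  simp [unitv, mul_add, sum_add_distrib]

lemma sum_mul_sub_unitv (s : Fin d → ℝ) (y : Fin d → ℤ) (i : Fin d) :
    ∑ j, s j * ((y - unitv d i) j : ℝ) = ∑ j, s j * (y j : ℝ) - s i := by
  simp [unitv, mul_sub, sum_sub_distrib]

lemma natAbs_sub_le_ellInfDiam {F : Finset (Fin d → ℤ)} {x y : Fin d → ℤ} (hx : x ∈ F)
    (hy : y ∈ F) (j : Fin d) : (x j - y j).natAbs ≤ ellInfDiam F :=
  (le_sup (f := fun k => (x k - y k).natAbs) (mem_univ j)).trans
    (le_sup (f := fun p : (Fin d → ℤ) × (Fin d → ℤ) => univ.sup fun k => (p.1 k - p.2 k).natAbs)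
      (b := (x, y)) (mem_product.2 ⟨hx, hy⟩))

lemma one_le_ellInfDiam {F : Finset (Fin d → ℤ)} {x y : Fin d → ℤ} (hx : x ∈ F) (hy : y ∈ F)
    (hxy : x ≠ y) : 1 ≤ ellInfDiam F := by
  obtain ⟨j, hj⟩ := Function.ne_iff.1 hxy
  exact (Int.natAbs_pos.2 (sub_ne_zero.2 hj)).trans_le (natAbs_sub_le_ellInfDiam hx hy j)

lemma sum_mul_sub_le_card_mul_norm_mul_ellInfDiam {F : Finset (Fin d → ℤ)} {x y : Fin d → ℤ}
    (hx : x ∈ F) (hy : y ∈ F) (s : Fin d → ℝ) :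
    ∑ j, s j * ((x j : ℝ) - y j) ≤ d * ‖s‖ * ellInfDiam F := by
  calc ∑ j, s j * ((x j : ℝ) - y j) ≤ ∑ _j : Fin d, ‖s‖ * (ellInfDiam F : ℝ) := by
        refine sum_le_sum fun j _ => ?_
        have hxy : |(x j : ℝ) - y j| ≤ ellInfDiam F := by
          rw [← Int.cast_sub, ← Int.cast_abs, Int.abs_eq_natAbs]
          exact_mod_cast natAbs_sub_le_ellInfDiam hx hy j
        calc s j * ((x j : ℝ) - y j) ≤ |s j| * |(x j : ℝ) - y j| :=
              (le_abs_self _).trans_eq (abs_mul _ _)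
          _ ≤ ‖s‖ * ellInfDiam F :=
              mul_le_mul (norm_le_pi_norm s j) hxy (abs_nonneg _) (norm_nonneg _)
    _ = d * ‖s‖ * ellInfDiam F := by simp [mul_assoc]

end Lattice

lemma prod_le_mean_pow {ι : Type*} [Fintype ι] (f : ι → ℝ) (hf : ∀ i, 0 ≤ f i) :
    ∏ i, f i ≤ ((∑ i, f i) / Fintype.card ι) ^ Fintype.card ι := by
  rcases isEmpty_or_nonempty ι with hι | hι
  · simp
  have hn : (0 : ℝ) < Fintype.card ι := by exact_mod_cast Fintype.card_pos
  have h := Real.geom_mean_le_arith_mean univ (fun _ => 1) f (fun _ _ => zero_le_one)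
    (by simpa using hn) (fun i _ => hf i)
  simp only [Real.rpow_one, one_mul, sum_const, card_univ, nsmul_eq_mul, mul_one] at h
  rwa [Real.rpow_inv_le_iff_of_pos (prod_nonneg fun i _ => hf i)
    (div_nonneg (sum_nonneg fun i _ => hf i) hn.le) hn, Real.rpow_natCast] at h

lemma volume_Icc_pi_le_mean_pow {ι : Type*} [Fintype ι] {a b : ι → ℝ} (hab : a ≤ b) :
    volume (Set.Icc a b) ≤
      ENNReal.ofReal (((∑ i, (b i - a i)) / Fintype.card ι) ^ Fintype.card ι) := by
  rw [Real.volume_Icc_pi, ← ENNReal.ofReal_prod_of_nonneg fun i _ => sub_nonneg.2 (hab i)]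
  exact ENNReal.ofReal_le_ofReal (prod_le_mean_pow _ fun i => sub_nonneg.2 (hab i))

section Closure

variable {d : ℕ} {E F : Finset (Fin d → ℤ)}

lemma mem_closure_of_mem (hF : (↑F : Set (Fin d → ℤ)) = ↑E ∪ bdry ↑E) {x : Fin d → ℤ}
    (hx : x ∈ E) : x ∈ F := by
  rw [← mem_coe, hF]
  exact Or.inl hx

lemma mem_closure_of_isNbr (hF : (↑F : Set (Fin d → ℤ)) = ↑E ∪ bdry ↑E) {x y : Fin d → ℤ}
    (hx : x ∈ E) (hxy : isNbr x y) : y ∈ F := by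
  rw [← mem_coe, hF]
  by_cases hy : y ∈ E
  · exact Or.inl hy
  · exact Or.inr ⟨hy, x, hx, hxy⟩

lemma mem_bdry_of_mem_closure (hF : (↑F : Set (Fin d → ℤ)) = ↑E ∪ bdry ↑E) {y : Fin d → ℤ}
    (hyF : y ∈ F) (hyE : y ∉ E) : y ∈ bdry (↑E : Set (Fin d → ℤ)) := by
  rw [← mem_coe, hF] at hyF
  exact hyF.resolve_left hyE

lemma one_le_ellInfDiam_of_bdry_nonempty (hF : (↑F : Set (Fin d → ℤ)) = ↑E ∪ bdry ↑E)
    (hb : (bdry (↑E : Set (Fin d → ℤ))).Nonempty) : 1 ≤ ellInfDiam F := by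
  obtain ⟨y, hyE, x, hx, hxy⟩ := hb
  exact one_le_ellInfDiam (mem_closure_of_mem hF hx) (mem_closure_of_isNbr hF hx hxy)
    (fun h => hyE (h ▸ hx))

end Closure

section Contact

variable {d : ℕ}

def slopeBox (u : (Fin d → ℤ) → ℝ) (z : Fin d → ℤ) : Set (Fin d → ℝ) :=
  Set.Icc (fun i => u (z + unitv d i) - u z) (fun i => u z - u (z - unitv d i))

lemma contact_subset_slopeBox {clE : Set (Fin d → ℤ)} {u : (Fin d → ℤ) → ℝ} {z : Fin d → ℤ}
    (hz : ∀ i, z + unitv d i ∈ clE ∧ z - unitv d i ∈ clE) : contact clE u z ⊆ slopeBox u z := by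
  intro s hs
  refine ⟨fun i => ?_, fun i => ?_⟩
  · have h := hs _ (hz i).1
    rw [sum_mul_add_unitv] at h
    dsimp only
    linarith
  · have h := hs _ (hz i).2
    rw [sum_mul_sub_unitv] at h
    dsimp only
    linarith

lemma exists_mem_contact {F : Finset (Fin d → ℤ)} (hF : F.Nonempty) (u : (Fin d → ℤ) → ℝ)
    (s : Fin d → ℝ) : ∃ y ∈ F, s ∈ contact ↑F u y :=
  let ⟨y, hy, hmax⟩ := F.exists_max_image (fun z => u z - ∑ j, s j * (z j : ℝ)) hF
  ⟨y, hy, fun z hz => hmax z hz⟩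

lemma La_eq_sum_mul_secondDiff {a : (Fin d → ℤ) → (Fin d → ℤ) → ℝ} {x : Fin d → ℤ}
    (hbal : ∀ i, a x (x + unitv d i) = a x (x - unitv d i)) (u : (Fin d → ℤ) → ℝ) :
    La a u x = ∑ i, a x (x + unitv d i) * (u (x + unitv d i) + u (x - unitv d i) - 2 * u x) := by
  refine sum_congr rfl fun i _ => ?_
  rw [← hbal i]
  ring

end Contact

section Volume

variable {d : ℕ} {κ : ℝ} {a : (Fin d → ℤ) → (Fin d → ℤ) → ℝ} {u : (Fin d → ℤ) → ℝ}

lemma volume_slopeBox_le (hκ : 0 < κ) {z : Fin d → ℤ} {g : ℝ}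
    (hbal : ∀ i, a z (z + unitv d i) = a z (z - unitv d i))
    (hell : ∀ i, κ ≤ a z (z + unitv d i)) (hne : (slopeBox u z).Nonempty)
    (hLa : -g ≤ La a u z) : volume (slopeBox u z) ≤ ENNReal.ofReal ((g / (κ * d)) ^ d) := by
  have hab := Set.nonempty_Icc.1 hne
  set w : Fin d → ℝ := fun i => (u z - u (z - unitv d i)) - (u (z + unitv d i) - u z)
  have hw : ∀ i, 0 ≤ w i := fun i => sub_nonneg.2 (hab i)
  have hsum : κ * ∑ i, w i ≤ g := by
    calc κ * ∑ i, w i ≤ ∑ i, a z (z + unitv d i) * w i := by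
          rw [mul_sum]
          exact sum_le_sum fun i _ => mul_le_mul_of_nonneg_right (hell i) (hw i)
      _ = -La a u z := by
          rw [La_eq_sum_mul_secondDiff hbal, ← sum_neg_distrib]
          exact sum_congr rfl fun i _ => by ring
      _ ≤ g := by linarith
  refine (volume_Icc_pi_le_mean_pow hab).trans (ENNReal.ofReal_le_ofReal ?_)
  rw [Fintype.card_fin, ← div_div]
  have hw' : 0 ≤ ∑ i, w i := sum_nonneg fun i _ => hw i
  gcongr
  rw [le_div_iff₀ hκ]
  linarith

variable {E F : Finset (Fin d → ℤ)} {g : (Fin d → ℤ) → ℝ}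

lemma volume_contact_le (hF : (↑F : Set (Fin d → ℤ)) = ↑E ∪ bdry ↑E) (hκ : 0 < κ)
    (hbal : ∀ x i, a x (x + unitv d i) = a x (x - unitv d i))
    (hell : ∀ x y, isNbr x y → κ ≤ a x y) {z : Fin d → ℤ} (hz : z ∈ E)
    (hne : (contact ↑F u z).Nonempty) (hLa : -g z ≤ La a u z) :
    volume (contact ↑F u z) ≤ ENNReal.ofReal ((g z / (κ * d)) ^ d) := by
  have hsub : contact ↑F u z ⊆ slopeBox u z := contact_subset_slopeBox fun i =>
    ⟨mem_closure_of_isNbr hF hz (isNbr_add_unitv z i),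
      mem_closure_of_isNbr hF hz (isNbr_sub_unitv z i)⟩
  exact (measure_mono hsub).trans <| volume_slopeBox_le hκ (hbal z)
    (fun i => hell z _ (isNbr_add_unitv z i)) (hne.mono hsub) hLa

lemma volume_biUnion_contact_le (hF : (↑F : Set (Fin d → ℤ)) = ↑E ∪ bdry ↑E) (hκ : 0 < κ)
    (hbal : ∀ x i, a x (x + unitv d i) = a x (x - unitv d i))
    (hell : ∀ x y, isNbr x y → κ ≤ a x y) (hgnn : ∀ x, 0 ≤ g x)
    (hLa : ∀ x ∈ E, (contact (↑F) u x).Nonempty → -g x ≤ La a u x) :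
    volume (⋃ z ∈ E, contact ↑F u z) ≤ ENNReal.ofReal
      ((∑ z ∈ E, if (contact ↑F u z).Nonempty then g z ^ d else 0) / (κ * d) ^ d) := by
  calc volume (⋃ z ∈ E, contact ↑F u z) ≤ ∑ z ∈ E, volume (contact ↑F u z) :=
        measure_biUnion_finset_le E _
    _ ≤ ∑ z ∈ E, ENNReal.ofReal
          ((if (contact ↑F u z).Nonempty then g z ^ d else 0) / (κ * d) ^ d) := by
        refine sum_le_sum fun z hz => ?_
        split_ifs with hne
        · rw [← div_pow]
          exact volume_contact_le hF hκ hbal hell hz hne (hLa z hz hne)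
        · simp [Set.not_nonempty_iff_eq_empty.1 hne]
    _ = _ := by
        rw [sum_div, ENNReal.ofReal_sum_of_nonneg fun z _ => by
          have := hgnn z
          positivity]

end Volume

lemma ball_subset_biUnion_contact {d : ℕ} {E F bF : Finset (Fin d → ℤ)}
    (hF : (↑F : Set (Fin d → ℤ)) = ↑E ∪ bdry ↑E) (hbF : (↑bF : Set (Fin d → ℤ)) = bdry ↑E)
    (hbne : bF.Nonempty) (hE : E.Nonempty) (u : (Fin d → ℤ) → ℝ) {r : ℝ}
    (hdD : 0 < (d : ℝ) * ellInfDiam F)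
    (hr : d * ellInfDiam F * r ≤ E.sup' hE u - bF.sup' hbne u) :
    Metric.ball (0 : Fin d → ℝ) r ⊆ ⋃ z ∈ E, contact ↑F u z := by
  intro s hs
  rw [mem_ball_zero_iff] at hs
  obtain ⟨y, hyF, hy⟩ := exists_mem_contact (hE.mono fun _ => mem_closure_of_mem hF) u s
  refine Set.mem_biUnion (Classical.not_not.1 fun hyE => ?_) hy
  have hym : u y ≤ bF.sup' hbne u := by
    refine le_sup' u ?_
    rw [← mem_coe, hbF]
    exact mem_bdry_of_mem_closure hF hyF hyE
  obtain ⟨x, hx, hxM⟩ := E.exists_mem_eq_sup' hE u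
  have hxy := hy x (mem_closure_of_mem hF hx)
  have hslope := sum_mul_sub_le_card_mul_norm_mul_ellInfDiam (mem_closure_of_mem hF hx) hyF s
  simp only [mul_sub, sum_sub_distrib] at hslope
  have hs' : (d : ℝ) * ‖s‖ * ellInfDiam F < d * ellInfDiam F * r := by
    rw [mul_right_comm]
    exact mul_lt_mul_of_pos_left hs hdD
  linarith

lemma two_mul_mul_pow_le_sum_contact {d : ℕ} (hd : 1 ≤ d) {κ : ℝ} (hκ : 0 < κ)
    {a : (Fin d → ℤ) → (Fin d → ℤ) → ℝ}
    (hbal : ∀ x i, a x (x + unitv d i) = a x (x - unitv d i))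
    (hell : ∀ x y, isNbr x y → κ ≤ a x y) {E F bF : Finset (Fin d → ℤ)}
    (hF : (↑F : Set (Fin d → ℤ)) = ↑E ∪ bdry ↑E) (hbF : (↑bF : Set (Fin d → ℤ)) = bdry ↑E)
    (hbne : bF.Nonempty) (hE : E.Nonempty) {u g : (Fin d → ℤ) → ℝ} (hgnn : ∀ x, 0 ≤ g x)
    (hLa : ∀ x ∈ E, (contact (↑F) u x).Nonempty → -g x ≤ La a u x) {r : ℝ} (hr : 0 < r)
    (hdD : 0 < (d : ℝ) * ellInfDiam F)
    (hrM : d * ellInfDiam F * r ≤ E.sup' hE u - bF.sup' hbne u) :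
    (2 * r * (κ * d)) ^ d ≤ ∑ z ∈ E, if (contact ↑F u z).Nonempty then g z ^ d else 0 := by
  have hvol := (measure_mono (ball_subset_biUnion_contact hF hbF hbne hE u hdD hrM)).trans
    (volume_biUnion_contact_le hF hκ hbal hell hgnn hLa)
  rw [Real.volume_pi_ball _ hr, Fintype.card_fin, ENNReal.ofReal_le_ofReal_iff, le_div_iff₀,
    ← mul_pow] at hvol
  · exact hvol
  · exact pow_pos (mul_pos hκ (by exact_mod_cast hd)) d
  · exact div_nonneg (sum_nonneg fun z _ => by split_ifs <;> [exact pow_nonneg (hgnn z) d; rfl])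
      (by positivity)

theorem stmt15_general {d : ℕ} (hd : 1 ≤ d) (κ : ℝ) (hκ : 0 < κ)
    (a : (Fin d → ℤ) → (Fin d → ℤ) → ℝ)
    (hbal : ∀ x i, a x (x + unitv d i) = a x (x - unitv d i))
    (hell : ∀ x y, isNbr x y → κ ≤ a x y)
    (E F bF : Finset (Fin d → ℤ))
    (hF : (↑F : Set (Fin d → ℤ)) = ↑E ∪ bdry (↑E))
    (hbF : (↑bF : Set (Fin d → ℤ)) = bdry (↑E))
    (hbne : bF.Nonempty)
    (u g : (Fin d → ℤ) → ℝ) (hgnn : ∀ x, 0 ≤ g x)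
    (hLa : ∀ x ∈ E, (contact (↑F) u x).Nonempty → -g x ≤ La a u x) :
    ∀ x ∈ E,
      u x ≤ (2 / κ) * (ellInfDiam F : ℝ) *
          (∑ z ∈ E, if (contact (↑F) u z).Nonempty then g z ^ d else 0) ^ ((1 : ℝ) / d)
        + bF.sup' hbne u := by
  intro x hx
  have hxM : u x ≤ E.sup' ⟨x, hx⟩ u := le_sup' u hx
  set M := E.sup' ⟨x, hx⟩ u
  set m := bF.sup' hbne u
  set D : ℝ := (ellInfDiam F : ℝ)
  set S := ∑ z ∈ E, if (contact (↑F) u z).Nonempty then g z ^ d else 0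
  have hS : 0 ≤ S := sum_nonneg fun z _ => by split_ifs <;> [exact pow_nonneg (hgnn z) d; rfl]
  rcases le_or_gt M m with hMm | hMm
  · have : 0 ≤ 2 / κ * D * S ^ ((1 : ℝ) / d) := by positivity
    linarith
  have hd' : (0 : ℝ) < d := by exact_mod_cast hd
  have hdD : 0 < (d : ℝ) * D := mul_pos hd' <| Nat.cast_pos.2 <|
    one_le_ellInfDiam_of_bdry_nonempty hF (hbF ▸ coe_nonempty.2 hbne)
  set r := (M - m) / (d * D)
  have hr : 0 < r := div_pos (sub_pos.2 hMm) hdD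
  have hrM : M - m = r * (d * D) := (div_mul_cancel₀ _ hdD.ne').symm
  have hpow := two_mul_mul_pow_le_sum_contact hd hκ hbal hell hF hbF hbne ⟨x, hx⟩ hgnn hLa hr hdD
    (by rw [hrM, mul_comm r])
  have hroot : 2 * r * (κ * d) ≤ S ^ ((1 : ℝ) / d) := by
    rwa [one_div, Real.le_rpow_inv_iff_of_pos (by positivity) hS hd', Real.rpow_natCast]
  calc u x ≤ m + r * (d * D) := by linarith
    _ ≤ m + 2 / κ * D * (2 * r * (κ * d)) := by
        field_simp
        nlinarith
    _ ≤ 2 / κ * D * S ^ ((1 : ℝ) / d) + m := by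
        rw [add_comm]
        gcongr

/-- Discrete ABP-type maximum principle: if `L_a u ≥ -g` on the contact points of `E`, then
`max_E u ≤ (2/κ) diam(Ē) (∑_{x ∈ E, I_u(x) ≠ ∅} g(x)^d)^{1/d} + max_{∂E} u`. -/
theorem stmt15 {d : ℕ} (hd : 1 ≤ d) (κ : ℝ) (hκ : 0 < κ)
    (a : (Fin d → ℤ) → (Fin d → ℤ) → ℝ)
    (hnn : ∀ x y, 0 ≤ a x y)
    (hsupp : ∀ x y, 0 < a x y → isNbr x y)
    (hsum : ∀ x, ∑ i : Fin d, (a x (x + unitv d i) + a x (x - unitv d i)) = 1)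
    (hbal : ∀ x i, a x (x + unitv d i) = a x (x - unitv d i))
    (hell : ∀ x y, isNbr x y → κ ≤ a x y)
    (E F bF : Finset (Fin d → ℤ))
    (hF : (↑F : Set (Fin d → ℤ)) = ↑E ∪ bdry (↑E))
    (hbF : (↑bF : Set (Fin d → ℤ)) = bdry (↑E))
    (hbne : bF.Nonempty)
    (u g : (Fin d → ℤ) → ℝ) (hgnn : ∀ x, 0 ≤ g x)
    (hLa : ∀ x ∈ E, (contact (↑F) u x).Nonempty → -g x ≤ La a u x) :
    ∀ x ∈ E,
      u x ≤ (2 / κ) * (ellInfDiam F : ℝ) *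
          (∑ z ∈ E, if (contact (↑F) u z).Nonempty then g z ^ d else 0) ^ ((1 : ℝ) / d)
        + bF.sup' hbne u :=
  stmt15_general hd κ hκ a hbal hell E F bF hF hbF hbne u g hgnn hLa
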